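/- Let A ∈ ℝ^{n×n} be symmetric with largest eigenvalue α₁ and smallest eigenvalue α_n, let λ ∈ ℝ be such that A + λI is positive definite, let g ∈ ℝ^n be nonzero, and let s ∈ ℝ^n satisfy (A + λI)·s = −g. Set κ = (α₁ + λ)/(α_n + λ). Then for every k ≥ 0, dist(s, K_k(g,A)) ≤ 2·‖s‖·((√κ − 1)/(√κ + 1))^{k+1}. -/

import Mathlib

open Matrix

noncomputable section

/-- Euclidean 2-norm of a finitely indexed real vector. -/
def euclNorm {ι : Type*} [Fintype ι] (v : ι → ℝ) : ℝ := ‖(WithLp.equiv 2 (ι → ℝ)).symm v‖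

/-- The Krylov subspace `K_k(g,A) = span{g, Ag, …, A^k g}`. -/
def krylov {n : ℕ} (A : Matrix (Fin n) (Fin n) ℝ) (g : Fin n → ℝ) (k : ℕ) :
    Submodule ℝ (Fin n → ℝ) :=
  Submodule.span ℝ {v | ∃ i : ℕ, i ≤ k ∧ v = (A ^ i).mulVec g}

/-- Euclidean distance from a vector to the Krylov subspace `K_k(g,A)`. -/
def kdist {n : ℕ} (A : Matrix (Fin n) (Fin n) ℝ) (g : Fin n → ℝ) (k : ℕ)
    (v : Fin n → ℝ) : ℝ :=
  sInf {r : ℝ | ∃ w ∈ krylov A g k, r = euclNorm (v - w)}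

open Polynomial

private lemma cheb_eval_aux (σ : ℝ) (hσ : σ ≠ 0) (m : ℕ) :
    (Polynomial.Chebyshev.T ℝ m).eval ((σ + σ⁻¹) / 2) = (σ ^ m + σ⁻¹ ^ m) / 2 := by
  induction m using Nat.twoStepInduction with
  | zero => simp
  | one => simp
  | more m ih1 ih2 =>
    have hc : ((m + 2 : ℕ) : ℤ) = (m : ℤ) + 2 := by push_cast; ring
    rw [hc, Polynomial.Chebyshev.T_add_two]
    have hc1 : ((m : ℤ) + 1) = ((m + 1 : ℕ) : ℤ) := by push_cast; ring
    rw [hc1]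
    simp only [eval_sub, eval_mul, eval_ofNat, eval_X, ih1, ih2]
    simp only [inv_pow]
    field_simp
    ring

private lemma cheb_abs_le (m : ℤ) (x : ℝ) (hx : |x| ≤ 1) :
    |(Polynomial.Chebyshev.T ℝ m).eval x| ≤ 1 := by
  obtain ⟨h1, h2⟩ := abs_le.mp hx
  have : x = Real.cos (Real.arccos x) := (Real.cos_arccos h1 h2).symm
  rw [this, Polynomial.Chebyshev.T_real_cos]
  exact Real.abs_cos_le_one _

private lemma cheb_natDegree_le (m : ℕ) : (Polynomial.Chebyshev.T ℝ m).natDegree ≤ m := by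
  induction m using Nat.twoStepInduction with
  | zero => simp
  | one => simp
  | more m ih1 ih2 =>
    have hc : ((m + 2 : ℕ) : ℤ) = (m : ℤ) + 2 := by push_cast; ring
    rw [hc, Polynomial.Chebyshev.T_add_two]
    refine le_trans (natDegree_sub_le _ _) (max_le ?_ (le_trans ih1 (Nat.le_add_right m 2)))
    have h2x : (2 * X : ℝ[X]).natDegree ≤ 1 :=
      le_trans natDegree_mul_le (by simp)
    have hc1 : ((m : ℤ) + 1) = ((m + 1 : ℕ) : ℤ) := by push_cast; ring
    rw [hc1]
    calc (2 * X * Polynomial.Chebyshev.T ℝ (m + 1 : ℕ)).natDegree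
        ≤ (2 * X : ℝ[X]).natDegree + (Polynomial.Chebyshev.T ℝ (m + 1 : ℕ)).natDegree :=
          natDegree_mul_le
      _ ≤ 1 + (m + 1) := add_le_add h2x ih2
      _ = m + 2 := by omega

private lemma cheb_poly_exists (a b : ℝ) (ha : 0 < a) (hab : a < b) (k : ℕ) :
    ∃ q : ℝ[X], q.natDegree ≤ k + 1 ∧ q.eval 0 = 1 ∧
      ∀ x, a ≤ x → x ≤ b →
        |q.eval x| ≤ 2 * ((Real.sqrt (b / a) - 1) / (Real.sqrt (b / a) + 1)) ^ (k + 1) := by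
  have hb : 0 < b := ha.trans hab
  set t := Real.sqrt (b / a) with htdef
  have hκ : 1 < b / a := (one_lt_div ha).mpr hab
  have ht1 : 1 < t := by
    rw [htdef, show (1:ℝ) = Real.sqrt 1 by simp]
    exact Real.sqrt_lt_sqrt (by norm_num) hκ
  have ht0 : 0 < t := lt_trans one_pos ht1
  have ht2 : t ^ 2 = b / a := Real.sq_sqrt (le_of_lt (lt_trans one_pos hκ))
  have hbeq : b = t ^ 2 * a := by
    field_simp at ht2
    linarith [ht2]
  set σ : ℝ := (t + 1) / (t - 1) with hσdef
  have htm1 : (0:ℝ) < t - 1 := by linarith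
  have htp1 : (0:ℝ) < t + 1 := by linarith
  have hσ1 : 1 < σ := (one_lt_div htm1).mpr (by linarith)
  have hσ0 : 0 < σ := lt_trans one_pos hσ1
  have hρσ : (t - 1) / (t + 1) = σ⁻¹ := by
    rw [hσdef, inv_div]
  have hba : 0 < b - a := by linarith
  set c₀ : ℝ := (b + a) / (b - a) with hc₀def
  have hc₀ : (σ + σ⁻¹) / 2 = c₀ := by
    rw [hσdef, hc₀def, hbeq, inv_div]
    have he : t ^ 2 * a - a = (t ^ 2 - 1) * a := by ring
    have h1 : t ^ 2 - 1 ≠ 0 := by nlinarith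
    rw [he]
    field_simp
    ring
  set Tc : ℝ := (Polynomial.Chebyshev.T ℝ (k + 1 : ℕ)).eval c₀ with hTcdef
  have hTc : Tc = (σ ^ (k+1) + σ⁻¹ ^ (k+1)) / 2 := by
    rw [hTcdef, ← hc₀, cheb_eval_aux σ (ne_of_gt hσ0)]
  have hσpow : 0 < σ ^ (k+1) := pow_pos hσ0 _
  have hσipow : 0 < σ⁻¹ ^ (k+1) := pow_pos (inv_pos.mpr hσ0) _
  have hTcpos : 0 < Tc := by rw [hTc]; positivity
  have hTcge : σ ^ (k+1) / 2 ≤ Tc := by rw [hTc]; linarith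
  have hTcinv : Tc⁻¹ ≤ 2 * σ⁻¹ ^ (k+1) := by
    have h1 : Tc⁻¹ ≤ (σ ^ (k+1) / 2)⁻¹ := by
      apply inv_anti₀ (by positivity) hTcge
    calc Tc⁻¹ ≤ (σ ^ (k+1) / 2)⁻¹ := h1
      _ = 2 * σ⁻¹ ^ (k+1) := by rw [inv_pow]; field_simp
  set L : ℝ[X] := C c₀ - C (2 / (b - a)) * X with hLdef
  refine ⟨C Tc⁻¹ * ((Polynomial.Chebyshev.T ℝ (k + 1 : ℕ)).comp L), ?_, ?_, ?_⟩
  · refine le_trans natDegree_mul_le ?_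
    rw [natDegree_C, zero_add]
    refine le_trans natDegree_comp_le ?_
    have hL : L.natDegree ≤ 1 := by
      refine le_trans (natDegree_sub_le _ _) (max_le (by simp) ?_)
      refine le_trans natDegree_mul_le (by simp)
    calc (Polynomial.Chebyshev.T ℝ (k + 1 : ℕ)).natDegree * L.natDegree
        ≤ (k + 1) * 1 := Nat.mul_le_mul (cheb_natDegree_le (k+1)) hL
      _ = k + 1 := by omega
  · rw [eval_mul, eval_C, eval_comp]
    have : L.eval 0 = c₀ := by simp [hLdef]
    rw [this]
    exact inv_mul_cancel₀ (ne_of_gt hTcpos)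
  · intro x hax hxb
    have hLx : L.eval x = (b + a - 2 * x) / (b - a) := by
      simp only [hLdef, eval_sub, eval_mul, eval_C, eval_X, hc₀def]
      field_simp
    have hLxabs : |L.eval x| ≤ 1 := by
      rw [hLx, abs_div, abs_of_pos hba, div_le_one hba, abs_le]
      constructor <;> linarith
    rw [eval_mul, eval_C, eval_comp, abs_mul, abs_of_pos (inv_pos.mpr hTcpos)]
    calc Tc⁻¹ * |(Polynomial.Chebyshev.T ℝ ((k:ℤ) + 1)).eval (L.eval x)|
        ≤ Tc⁻¹ * 1 := by
          refine mul_le_mul_of_nonneg_left ?_ (le_of_lt (inv_pos.mpr hTcpos))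
          exact cheb_abs_le _ _ hLxabs
      _ = Tc⁻¹ := mul_one _
      _ ≤ 2 * σ⁻¹ ^ (k+1) := hTcinv
      _ = 2 * ((t - 1) / (t + 1)) ^ (k+1) := by rw [hρσ]

private lemma pow_mulVec_eig {n : ℕ} (M : Matrix (Fin n) (Fin n) ℝ) (v : Fin n → ℝ) (μ : ℝ)
    (h : M.mulVec v = μ • v) : ∀ j : ℕ, (M ^ j).mulVec v = μ ^ j • v := by
  intro j
  induction j with
  | zero => simp
  | succ j ih =>
    rw [pow_succ', pow_succ', ← Matrix.mulVec_mulVec, ih, Matrix.mulVec_smul, h,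
      smul_smul, mul_comm]

private lemma aeval_mulVec_eig {n : ℕ} (M : Matrix (Fin n) (Fin n) ℝ) (v : Fin n → ℝ) (μ : ℝ)
    (h : M.mulVec v = μ • v) (p : ℝ[X]) :
    (Polynomial.aeval M p).mulVec v = p.eval μ • v := by
  rw [Polynomial.aeval_eq_sum_range, Polynomial.eval_eq_sum_range]
  have hsum : ∀ (t : Finset ℕ) (F : ℕ → Matrix (Fin n) (Fin n) ℝ),
      (∑ i ∈ t, F i) *ᵥ v = ∑ i ∈ t, (F i *ᵥ v) :=
    fun t F => map_sum (AddMonoidHom.mk' (fun M : Matrix (Fin n) (Fin n) ℝ => M *ᵥ v)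
      (fun M N => Matrix.add_mulVec M N v)) F t
  rw [hsum]
  simp only [Matrix.smul_mulVec, pow_mulVec_eig M v μ h, smul_smul, Finset.sum_smul]

private lemma aeval_transpose {n : ℕ} (M : Matrix (Fin n) (Fin n) ℝ) (hM : Mᵀ = M) (p : ℝ[X]) :
    (Polynomial.aeval M p : Matrix (Fin n) (Fin n) ℝ)ᵀ = Polynomial.aeval M p := by
  rw [Polynomial.aeval_eq_sum_range]
  rw [Matrix.transpose_sum]
  simp only [Matrix.transpose_smul, Matrix.transpose_pow, hM]

private lemma symm_dot {n : ℕ} (M : Matrix (Fin n) (Fin n) ℝ) (hM : Mᵀ = M)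
    (u w : Fin n → ℝ) : u ⬝ᵥ (M *ᵥ w) = (M *ᵥ u) ⬝ᵥ w := by
  rw [Matrix.dotProduct_mulVec]
  congr 1
  conv_lhs => rw [← hM]
  rw [Matrix.vecMul_transpose]


private lemma mulVec_sum' {n : ℕ} (v : Fin n → ℝ) (t : Finset ℕ)
    (F : ℕ → Matrix (Fin n) (Fin n) ℝ) :
    (∑ i ∈ t, F i) *ᵥ v = ∑ i ∈ t, (F i *ᵥ v) :=
  map_sum (AddMonoidHom.mk' (fun M : Matrix (Fin n) (Fin n) ℝ => M *ᵥ v)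
    (fun M N => Matrix.add_mulVec M N v)) F t

private lemma aeval_mulVec_mem {n : ℕ} (A : Matrix (Fin n) (Fin n) ℝ) (g : Fin n → ℝ)
    (k : ℕ) (p : ℝ[X]) (hp : p.natDegree ≤ k) :
    (Polynomial.aeval A p) *ᵥ g ∈ krylov A g k := by
  rw [Polynomial.aeval_eq_sum_range, mulVec_sum']
  refine Submodule.sum_mem _ fun i hi => ?_
  rw [Matrix.smul_mulVec]
  refine Submodule.smul_mem _ _ (Submodule.subset_span ?_)
  exact ⟨i, by have := Finset.mem_range.mp hi; omega, rfl⟩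

private lemma dot_self_pos {n : ℕ} (v : Fin n → ℝ) (hv : v ≠ 0) : 0 < v ⬝ᵥ v := by
  have h1 : 0 ≤ v ⬝ᵥ v := Finset.sum_nonneg fun i _ => mul_self_nonneg _
  rcases h1.eq_or_lt with h | h
  · exact absurd ((dotProduct_self_eq_zero).mp h.symm) hv
  · exact h


/-- If `A` is symmetric with largest eigenvalue `α₁` and smallest eigenvalue `α_n`,
`A + λI` is positive definite, and `(A + λI) s = −g` with `g ≠ 0`, then with
`κ = (α₁ + λ)/(α_n + λ)` one has
`dist(s, K_k(g,A)) ≤ 2 ‖s‖ ((√κ − 1)/(√κ + 1))^{k+1}` for every `k ≥ 0`. -/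
theorem stmt_6 {n : ℕ} (A : Matrix (Fin n) (Fin n) ℝ) (hA : A.IsSymm)
    (α₁ αn : ℝ)
    (hα₁ : (∃ v : Fin n → ℝ, v ≠ 0 ∧ A.mulVec v = α₁ • v) ∧
      ∀ (μ : ℝ) (v : Fin n → ℝ), v ≠ 0 → A.mulVec v = μ • v → μ ≤ α₁)
    (hαn : (∃ v : Fin n → ℝ, v ≠ 0 ∧ A.mulVec v = αn • v) ∧
      ∀ (μ : ℝ) (v : Fin n → ℝ), v ≠ 0 → A.mulVec v = μ • v → αn ≤ μ)
    (lam : ℝ) (hpd : (A + lam • (1 : Matrix (Fin n) (Fin n) ℝ)).PosDef)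
    (g : Fin n → ℝ) (hg : g ≠ 0) (s : Fin n → ℝ)
    (hs : (A + lam • (1 : Matrix (Fin n) (Fin n) ℝ)).mulVec s = -g)
    (κ : ℝ) (hκ : κ = (α₁ + lam) / (αn + lam)) :
    ∀ k : ℕ,
      kdist A g k s ≤
        2 * euclNorm s * ((Real.sqrt κ - 1) / (Real.sqrt κ + 1)) ^ (k + 1) := by
  intro k
  classical
  have hH : A.IsHermitian := by
    rw [Matrix.IsHermitian, Matrix.conjTranspose_eq_transpose_of_trivial]; exact hA
  set B := hH.eigenvectorBasis with hBdef
  set μ : Fin n → ℝ := hH.eigenvalues with hμdef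
  set u : Fin n → Fin n → ℝ := fun i => WithLp.equiv 2 (Fin n → ℝ) (B i) with hudef
  have heig : ∀ i, A *ᵥ u i = μ i • u i := fun i => hH.mulVec_eigenvectorBasis i
  have hu0 : ∀ i, u i ≠ 0 := by
    intro i h
    apply B.orthonormal.ne_zero i
    have := congrArg (WithLp.equiv 2 (Fin n → ℝ)).symm h
    simpa [hudef] using this
  have hdot1 : ∀ i, u i ⬝ᵥ u i = 1 := by
    intro i
    have h1 : (inner ℝ (B i) (B i) : ℝ) = 1 := by
      rw [real_inner_self_eq_norm_sq, B.orthonormal.1 i]; norm_num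
    rw [EuclideanSpace.inner_eq_star_dotProduct] at h1
    simpa [hudef] using h1
  -- symmetric matrices move across dot products
  have hAl : (A + lam • (1 : Matrix (Fin n) (Fin n) ℝ))ᵀ
      = A + lam • (1 : Matrix (Fin n) (Fin n) ℝ) := by
    rw [Matrix.transpose_add, Matrix.transpose_smul, Matrix.transpose_one, hA]
  have hAlv : ∀ (v : Fin n → ℝ) (ν : ℝ), A *ᵥ v = ν • v →
      (A + lam • (1 : Matrix (Fin n) (Fin n) ℝ)) *ᵥ v = (ν + lam) • v := by
    intro v ν hv
    rw [Matrix.add_mulVec, hv, Matrix.smul_mulVec, Matrix.one_mulVec, add_smul]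
  have hposval : ∀ (v : Fin n → ℝ) (ν : ℝ), v ≠ 0 → A *ᵥ v = ν • v → 0 < ν + lam := by
    intro v ν hv0 hv
    have h := hpd.dotProduct_mulVec_pos hv0
    rw [hAlv v ν hv] at h
    simp only [star_trivial, dotProduct_smul, smul_eq_mul] at h
    have := dot_self_pos v hv0
    nlinarith
  have hmpos : ∀ i, 0 < μ i + lam := fun i => hposval (u i) (μ i) (hu0 i) (heig i)
  obtain ⟨vn, hvn0, hvn⟩ := hαn.1
  have ha : 0 < αn + lam := hposval vn αn hvn0 hvn
  have hα : αn ≤ α₁ := hα₁.2 αn vn hvn0 hvn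
  have hμub : ∀ i, μ i ≤ α₁ := fun i => hα₁.2 (μ i) (u i) (hu0 i) (heig i)
  have hμlb : ∀ i, αn ≤ μ i := fun i => hαn.2 (μ i) (u i) (hu0 i) (heig i)
  -- norms via the eigenbasis
  have hrepr : ∀ (x : Fin n → ℝ) (i : Fin n),
      B.repr ((WithLp.equiv 2 (Fin n → ℝ)).symm x) i = u i ⬝ᵥ x := by
    intro x i
    rw [B.repr_apply_apply, EuclideanSpace.inner_eq_star_dotProduct]
    simp [hudef]
    exact dotProduct_comm _ _
  have hnorm : ∀ x : Fin n → ℝ, euclNorm x ^ 2 = ∑ i, (u i ⬝ᵥ x) ^ 2 := by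
    intro x
    have h1 : euclNorm x = ‖B.repr ((WithLp.equiv 2 (Fin n → ℝ)).symm x)‖ :=
      (B.repr.norm_map _).symm
    rw [h1, EuclideanSpace.norm_eq, Real.sq_sqrt (Finset.sum_nonneg fun i _ => by positivity)]
    refine Finset.sum_congr rfl fun i _ => ?_
    rw [hrepr, Real.norm_eq_abs, sq_abs]
  have hext : ∀ x y : Fin n → ℝ, (∀ i, u i ⬝ᵥ x = u i ⬝ᵥ y) → x = y := by
    intro x y h
    have h1 : B.repr ((WithLp.equiv 2 (Fin n → ℝ)).symm x)
        = B.repr ((WithLp.equiv 2 (Fin n → ℝ)).symm y) := by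
      ext i; rw [hrepr, hrepr]; exact h i
    exact (WithLp.equiv 2 (Fin n → ℝ)).symm.injective (B.repr.injective h1)
  -- dot products of s
  have hsdot : ∀ i, (μ i + lam) * (u i ⬝ᵥ s) = -(u i ⬝ᵥ g) := by
    intro i
    have h1 := congrArg (fun z => u i ⬝ᵥ z) hs
    rw [symm_dot _ hAl, hAlv (u i) (μ i) (heig i), smul_dotProduct,
      dotProduct_neg] at h1
    simpa using h1
  have hsdot' : ∀ i, u i ⬝ᵥ s = -(u i ⬝ᵥ g) / (μ i + lam) := by
    intro i
    rw [eq_div_iff (ne_of_gt (hmpos i)), mul_comm]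
    exact hsdot i
  -- generic bound for kdist
  have hbdd : BddBelow {r : ℝ | ∃ w ∈ krylov A g k, r = euclNorm (s - w)} := by
    refine ⟨0, ?_⟩
    rintro r ⟨w, hw, rfl⟩
    exact norm_nonneg _
  have hkd : ∀ w ∈ krylov A g k, kdist A g k s ≤ euclNorm (s - w) := by
    intro w hw
    exact csInf_le hbdd ⟨w, hw, rfl⟩
  by_cases hdeg : α₁ = αn
  · -- degenerate case : κ = 1
    have hκ1 : κ = 1 := by rw [hκ, hdeg, div_self (ne_of_gt ha)]
    have hrhs : ((Real.sqrt κ - 1) / (Real.sqrt κ + 1)) ^ (k + 1) = 0 := by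
      rw [hκ1, Real.sqrt_one]
      norm_num
    have hμall : ∀ i, μ i = α₁ := fun i => le_antisymm (hμub i) (hdeg ▸ hμlb i)
    have hsg : s = (-(α₁ + lam)⁻¹) • g := by
      apply hext
      intro i
      rw [hsdot' i, hμall i, dotProduct_smul, smul_eq_mul]
      field_simp
    have hsmem : s ∈ krylov A g k := by
      rw [hsg]
      refine Submodule.smul_mem _ _ (Submodule.subset_span ?_)
      exact ⟨0, Nat.zero_le k, by simp [Matrix.one_mulVec]⟩
    have h0 : kdist A g k s ≤ 0 := by
      have := hkd s hsmem
      simpa [euclNorm] using this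
    rw [hrhs, mul_zero]
    exact h0
  · -- nondegenerate case
    have hab : αn + lam < α₁ + lam := by
      rcases lt_or_eq_of_le hα with h | h
      · linarith
      · exact absurd h.symm hdeg
    obtain ⟨q, hqdeg, hq0, hqbd⟩ := cheb_poly_exists (αn + lam) (α₁ + lam) ha hab k
    have hκba : (α₁ + lam) / (αn + lam) = κ := hκ.symm
    rw [hκba] at hqbd
    set M : ℝ := 2 * ((Real.sqrt κ - 1) / (Real.sqrt κ + 1)) ^ (k + 1) with hMdef
    have hκ1 : 1 < κ := by rw [hκ]; exact (one_lt_div ha).mpr hab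
    have hsqκ : 1 < Real.sqrt κ := by
      rw [show (1:ℝ) = Real.sqrt 1 by simp]
      exact Real.sqrt_lt_sqrt (by norm_num) hκ1
    have hM0 : 0 ≤ M := by
      rw [hMdef]
      have : 0 ≤ (Real.sqrt κ - 1) / (Real.sqrt κ + 1) := by
        apply div_nonneg <;> linarith
      positivity
    -- extract r with q = 1 + X * r
    have hdvd : X ∣ (q - C 1) := by
      rw [Polynomial.X_dvd_iff, Polynomial.coeff_zero_eq_eval_zero]
      simp [hq0]
    obtain ⟨r, hr⟩ := hdvd
    have hqr : q = C 1 + X * r := by rw [← hr]; ring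
    have hrdeg : r.natDegree ≤ k := by
      by_cases hr0 : r = 0
      · simp [hr0]
      · have h1 : (q - C 1).natDegree ≤ k + 1 := by
          refine le_trans (natDegree_sub_le _ _) (max_le hqdeg (by simp))
        rw [hr, natDegree_mul X_ne_zero hr0, natDegree_X] at h1
        omega
    set p : ℝ[X] := r.comp (X + C lam) with hpdef
    have hpdeg : p.natDegree ≤ k := by
      refine le_trans natDegree_comp_le ?_
      have h1 : (X + C lam : ℝ[X]).natDegree ≤ 1 := by
        refine le_trans (natDegree_add_le _ _) (by simp)
      calc r.natDegree * (X + C lam : ℝ[X]).natDegree ≤ k * 1 :=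
            Nat.mul_le_mul hrdeg h1
        _ = k := by omega
    set w : Fin n → ℝ := (Polynomial.aeval A p) *ᵥ g with hwdef
    have hwmem : w ∈ krylov A g k := aeval_mulVec_mem A g k p hpdeg
    have hwdot : ∀ i, u i ⬝ᵥ w = p.eval (μ i) * (u i ⬝ᵥ g) := by
      intro i
      rw [hwdef, symm_dot _ (aeval_transpose A hA p),
        aeval_mulVec_eig A (u i) (μ i) (heig i) p, smul_dotProduct, smul_eq_mul]
    have hpq : ∀ i, u i ⬝ᵥ (s - w) = (u i ⬝ᵥ s) * q.eval (μ i + lam) := by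
      intro i
      have hqe : q.eval (μ i + lam) = 1 + (μ i + lam) * r.eval (μ i + lam) := by
        rw [hqr]; simp
      have hpe : p.eval (μ i) = r.eval (μ i + lam) := by
        rw [hpdef, eval_comp]; simp
      rw [dotProduct_sub, hwdot i, hqe, hpe, hsdot' i]
      have hm := hmpos i
      field_simp
      ring
    have hqb : ∀ i, (q.eval (μ i + lam)) ^ 2 ≤ M ^ 2 := by
      intro i
      have h1 := hqbd (μ i + lam) (by linarith [hμlb i]) (by linarith [hμub i])
      rw [hMdef]
      calc (q.eval (μ i + lam)) ^ 2 = |q.eval (μ i + lam)| ^ 2 := (sq_abs _).symm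
        _ ≤ (2 * ((Real.sqrt κ - 1) / (Real.sqrt κ + 1)) ^ (k + 1)) ^ 2 := by
            apply pow_le_pow_left₀ (abs_nonneg _) h1
    have hsq : euclNorm (s - w) ^ 2 ≤ (M * euclNorm s) ^ 2 := by
      rw [hnorm (s - w), mul_pow, hnorm s, Finset.mul_sum]
      refine Finset.sum_le_sum fun i _ => ?_
      rw [hpq i, mul_pow]
      calc (u i ⬝ᵥ s) ^ 2 * q.eval (μ i + lam) ^ 2
          ≤ (u i ⬝ᵥ s) ^ 2 * M ^ 2 := by
            apply mul_le_mul_of_nonneg_left (hqb i) (sq_nonneg _)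
        _ = M ^ 2 * (u i ⬝ᵥ s) ^ 2 := by ring
    have hfin : euclNorm (s - w) ≤ M * euclNorm s := by
      have h1 : (0:ℝ) ≤ euclNorm (s - w) := norm_nonneg _
      have h2 : (0:ℝ) ≤ M * euclNorm s := mul_nonneg hM0 (norm_nonneg _)
      nlinarith
    calc kdist A g k s ≤ euclNorm (s - w) := hkd w hwmem
      _ ≤ M * euclNorm s := hfin
      _ = 2 * euclNorm s * ((Real.sqrt κ - 1) / (Real.sqrt κ + 1)) ^ (k + 1) := by
          rw [hMdef]; ring
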